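/- Let A ∈ ℝ^{m×n}, b ∈ ℝ^m, c, u ∈ ℝ^n with u ≥ 0, let σ ≥ 0, π ∈ ℝ^m, and let x ∈ P_{A,b,u} be a feasible solution of LP(A,b,c,u). Then there exists an optimal solution x* of LP(A,b,c,u) such that |x_i − x*_i| ≤ κ(X_A)·θ(x,π,σ) for every i ∈ J(π,σ). -/

import Mathlib

open BigOperators Finset

noncomputable section

open Classical

/-- A nonzero `g ∈ W` is an elementary vector of `W` if no nonzero `h ∈ W`
has strictly smaller support. -/
def IsElementaryVec {ι : Type*} (W : Submodule ℝ (ι → ℝ)) (g : ι → ℝ) : Prop :=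
  g ∈ W ∧ g ≠ 0 ∧ ∀ h : ι → ℝ, h ∈ W → h ≠ 0 → ¬ ({i | h i ≠ 0} ⊂ {i | g i ≠ 0})

/-- The circuit imbalance measure `κ(W)`: the maximum of `|g j / g i|` over elementary
vectors `g` of `W` and `i, j ∈ supp(g)`, with `κ(W) := 1` for the trivial subspaces. -/
noncomputable def kappaSub {ι : Type*} (W : Submodule ℝ (ι → ℝ)) : ℝ :=
  if W = ⊥ ∨ W = ⊤ then 1
  else sSup {t : ℝ | ∃ g : ι → ℝ, IsElementaryVec W g ∧
    ∃ i j : ι, g i ≠ 0 ∧ g j ≠ 0 ∧ t = |g j / g i|}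

/-- `y` conforms to `x` if `x i * y i > 0` whenever `y i ≠ 0`. -/
def Conforms {ι : Type*} (x y : ι → ℝ) : Prop :=
  ∀ i, y i ≠ 0 → x i * y i > 0

/-- The extended subspace `X_A := ker (A | −I_m) ⊆ ℝ^{n+m}`. -/
noncomputable def XA {m n : ℕ} (A : Matrix (Fin m) (Fin n) ℝ) :
    Submodule ℝ (Fin n ⊕ Fin m → ℝ) :=
  LinearMap.ker (Matrix.fromCols A (-1)).mulVecLin

/-- The optimal value `Φ(A,b,c,u)` of `LP(A,b,c,u)`:
`min ⟨c,x⟩  s.t.  Ax = b, 0 ≤ x ≤ u`. -/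
noncomputable def PhiLP {m : ℕ} {ι : Type*} [Fintype ι] (A : Matrix (Fin m) ι ℝ)
    (b : Fin m → ℝ) (c u : ι → ℝ) : ℝ :=
  sInf {v : ℝ | ∃ x : ι → ℝ, A.mulVec x = b ∧ 0 ≤ x ∧ x ≤ u ∧ v = ∑ i, c i * x i}

/-- `θ(x,π,σ) = Σ_{i : c_i − A_i^⊤π > σ} x_i + Σ_{i : c_i − A_i^⊤π < −σ} (u_i − x_i)`. -/
noncomputable def thetaLP {m n : ℕ} (A : Matrix (Fin m) (Fin n) ℝ) (c u x : Fin n → ℝ)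
    (π : Fin m → ℝ) (σ : ℝ) : ℝ :=
  (∑ i ∈ Finset.univ.filter (fun i => c i - ∑ j, A j i * π j > σ), x i) +
    ∑ i ∈ Finset.univ.filter (fun i => c i - ∑ j, A j i * π j < -σ), (u i - x i)

/-! Let `xs` be any optimal solution and decompose `xs - x` into elementary vectors `g` of
`ker A` conforming to it. Each `xs - g` lies between `xs` and `x`, hence is feasible, so
optimality gives `⟨c - Aᵀπ, g⟩ ≤ 0`. For `i ∈ J(π,σ)` the term of coordinate `i` is too large
to be balanced unless `g` has a coordinate `j` where it decreases the reduced cost at a rate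
above `σ`, and `|g i| ≤ κ |g j|` by circuit imbalance. At such coordinates `xs - x` moves
against the sign of the reduced cost, which `θ(x,π,σ)` bounds once summed over the pieces. -/

open Function Matrix

namespace Conforms

variable {ι : Type*} {x y z : ι → ℝ}

theorem refl (x : ι → ℝ) : Conforms x x := fun _ hi => mul_self_pos.2 hi

theorem ne_zero (h : Conforms x y) {i : ι} (hi : y i ≠ 0) : x i ≠ 0 :=
  left_ne_zero_of_mul (h i hi).ne'

theorem support_subset (h : Conforms x y) : support y ⊆ support x := fun _ hi => h.ne_zero hi

theorem trans (hxy : Conforms x y) (hyz : Conforms y z) : Conforms x z := fun i hi => by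
  have h1 := hxy i (hyz.ne_zero hi)
  have h2 := hyz i hi
  nlinarith [mul_pos h1 h2, sq_nonneg (y i)]

theorem smul (h : Conforms x y) {t : ℝ} (ht : 0 < t) : Conforms x (t • y) := fun i hi => by
  have := h i (right_ne_zero_of_mul hi)
  simp only [Pi.smul_apply, smul_eq_mul]
  nlinarith

end Conforms

theorem abs_eq_sum_abs_of_conforms {ι : Type*} {k : ℕ} {w : ι → ℝ} {g : Fin k → ι → ℝ}
    (hconf : ∀ l, Conforms w (g l)) (hsum : ∑ l, g l = w) (j : ι) :
    |w j| = ∑ l, |g l j| := by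
  have hj : w j = ∑ l, g l j := by rw [← hsum, Finset.sum_apply]
  rcases le_or_gt 0 (w j) with hw | hw
  · have hg : ∀ l, 0 ≤ g l j := fun l => by
      by_contra! hl; nlinarith [hconf l j hl.ne]
    rw [abs_of_nonneg hw, hj]
    exact Finset.sum_congr rfl fun l _ => (abs_of_nonneg (hg l)).symm
  · have hg : ∀ l, g l j ≤ 0 := fun l => by
      by_contra! hl; nlinarith [hconf l j hl.ne']
    rw [abs_of_neg hw, hj, ← Finset.sum_neg_distrib]
    exact Finset.sum_congr rfl fun l _ => (abs_of_nonpos (hg l)).symm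

theorem abs_le_abs_of_conforms {ι : Type*} {k : ℕ} {w : ι → ℝ} {g : Fin k → ι → ℝ}
    (hconf : ∀ l, Conforms w (g l)) (hsum : ∑ l, g l = w) (l : Fin k) (j : ι) :
    |g l j| ≤ |w j| :=
  (Finset.single_le_sum (f := fun l => |g l j|) (fun _ _ => abs_nonneg _)
    (Finset.mem_univ l)).trans_eq (abs_eq_sum_abs_of_conforms hconf hsum j).symm

section Elementary

variable {ι : Type*} {W : Submodule ℝ (ι → ℝ)}

theorem IsElementaryVec.smul {g : ι → ℝ} (hg : IsElementaryVec W g) {t : ℝ} (ht : t ≠ 0) :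
    IsElementaryVec W (t • g) := by
  obtain ⟨hgW, hg0, hmin⟩ := hg
  refine ⟨W.smul_mem t hgW, smul_ne_zero ht hg0, fun h hW h0 => ?_⟩
  change ¬ support h ⊂ support (t • g)
  rw [support_const_smul_of_ne_zero t g ht]
  exact hmin h hW h0

/-- One step of the conformal decomposition: move from `w` along `h` until the first
coordinate where they have opposite signs vanishes. -/
theorem exists_conforms_add_smul [Finite ι] {w h : ι → ℝ} (hsupp : support h ⊆ support w)
    (hneg : ∃ i, w i * h i < 0) :
    ∃ t : ℝ, 0 < t ∧ Conforms w (w + t • h) ∧ support (w + t • h) ⊂ support w := by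
  have := Fintype.ofFinite ι
  obtain ⟨i₀, hi₀, hmin⟩ := Finset.exists_min_image (Finset.univ.filter fun i => w i * h i < 0)
    (fun i => -w i / h i) (let ⟨i, hi⟩ := hneg; ⟨i, by simpa using hi⟩)
  simp only [Finset.mem_filter, Finset.mem_univ, true_and] at hi₀ hmin
  have hh₀ : h i₀ ≠ 0 := right_ne_zero_of_mul hi₀.ne
  have hw₀ : w i₀ ≠ 0 := left_ne_zero_of_mul hi₀.ne
  set t := -w i₀ / h i₀
  have ht : 0 < t := by
    rw [div_pos_iff]; rcases lt_or_gt_of_ne hh₀ with h' | h'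
    · right; constructor <;> nlinarith
    · left; constructor <;> nlinarith
  have hconf : Conforms w (w + t • h) := by
    intro i hi
    simp only [Pi.add_apply, Pi.smul_apply, smul_eq_mul] at hi ⊢
    by_cases hhi : h i = 0
    · simp only [hhi, mul_zero, add_zero] at hi ⊢
      exact mul_self_pos.2 hi
    have hwi : w i ≠ 0 := hsupp hhi
    rcases lt_or_ge (w i * h i) 0 with hlt | hge
    · have hle : t * (-(w i * h i)) ≤ -w i / h i * (-(w i * h i)) :=
        mul_le_mul_of_nonneg_right (hmin i hlt) (by linarith)
      have hkey : -w i / h i * (-(w i * h i)) = w i * w i := by field_simp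
      have hnn : 0 ≤ w i * (w i + t * h i) := by nlinarith
      exact hnn.lt_of_ne (mul_ne_zero hwi hi).symm
    · nlinarith [mul_self_pos.2 hwi, mul_nonneg ht.le hge]
  refine ⟨t, ht, hconf, hconf.support_subset, fun hsub => ?_⟩
  have : (w + t • h) i₀ ≠ 0 := hsub hw₀
  simp only [Pi.add_apply, Pi.smul_apply, smul_eq_mul, t] at this
  exact this (by field_simp; ring)

theorem exists_isElementaryVec_conforms [Finite ι] {w : ι → ℝ} (hw : w ∈ W) (hw0 : w ≠ 0) :
    ∃ g, IsElementaryVec W g ∧ Conforms w g := by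
  by_cases hel : IsElementaryVec W w
  · exact ⟨w, hel, Conforms.refl w⟩
  obtain ⟨h, hhW, hh0, hss⟩ : ∃ h ∈ W, h ≠ 0 ∧ support h ⊂ support w := by
    simpa [IsElementaryVec, hw, hw0, support] using hel
  -- replacing `h` by `-h` if necessary, `h` has a coordinate of sign opposite to `w`
  obtain ⟨h', hh'W, hh'supp, hneg⟩ : ∃ h' ∈ W, support h' = support h ∧ ∃ i, w i * h' i < 0 := by
    by_cases hmis : ∃ i, w i * h i < 0
    · exact ⟨h, hhW, rfl, hmis⟩
    obtain ⟨i, hi⟩ := Function.ne_iff.1 hh0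
    have hpos : 0 < w i * h i :=
      (not_lt.1 fun h' => hmis ⟨i, h'⟩).lt_of_ne (mul_ne_zero (hss.1 hi) hi).symm
    exact ⟨-h, W.neg_mem hhW, support_neg h, i, by simpa using hpos⟩
  obtain ⟨t, -, hconf, hlt⟩ := exists_conforms_add_smul (hh'supp ▸ hss.1) hneg
  have hne : w + t • h' ≠ 0 := by
    obtain ⟨j, hjw, hjh⟩ := Set.exists_of_ssubset hss
    rw [← hh'supp, mem_support, not_not] at hjh
    exact Function.ne_iff.2 ⟨j, by simpa [hjh] using hjw⟩
  have : (support (w + t • h')).ncard < (support w).ncard := Set.ncard_lt_ncard hlt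
  obtain ⟨g, hg, hg'⟩ := exists_isElementaryVec_conforms (W.add_mem hw (W.smul_mem t hh'W)) hne
  exact ⟨g, hg, hconf.trans hg'⟩
termination_by (support w).ncard

theorem exists_conformal_decomposition [Finite ι] {w : ι → ℝ} (hw : w ∈ W) :
    ∃ (k : ℕ) (g : Fin k → ι → ℝ),
      (∀ l, IsElementaryVec W (g l)) ∧ (∀ l, Conforms w (g l)) ∧ ∑ l, g l = w := by
  by_cases hw0 : w = 0
  · exact ⟨0, Fin.elim0, fun l => l.elim0, fun l => l.elim0, by simp [hw0]⟩
  obtain ⟨g₀, hg₀, hwg₀⟩ := exists_isElementaryVec_conforms hw hw0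
  obtain ⟨i, hi⟩ := Function.ne_iff.1 hg₀.2.1
  obtain ⟨t, ht, hconf, hlt⟩ := exists_conforms_add_smul (w := w) (h := -g₀)
    (by simpa using hwg₀.support_subset) ⟨i, by simpa using hwg₀ i hi⟩
  have : (support (w + t • -g₀)).ncard < (support w).ncard := Set.ncard_lt_ncard hlt
  obtain ⟨k, g, hg, hwg, hsum⟩ :=
    exists_conformal_decomposition (W.add_mem hw (W.smul_mem t (W.neg_mem hg₀.1)))
  refine ⟨k + 1, Fin.cons (t • g₀) g, Fin.forall_fin_succ.2 ⟨hg₀.smul ht.ne', hg⟩,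
    Fin.forall_fin_succ.2 ⟨hwg₀.smul ht, fun l => hconf.trans (hwg l)⟩, ?_⟩
  rw [Fin.sum_univ_succ, Fin.cons_zero]
  simp only [Fin.cons_succ, hsum, smul_neg]
  abel
termination_by (support w).ncard
decreasing_by simpa using this

end Elementary

section Kappa

variable {ι : Type*} {W : Submodule ℝ (ι → ℝ)}

theorem IsElementaryVec.exists_eq_smul {g h : ι → ℝ} (hg : IsElementaryVec W g) (hhW : h ∈ W)
    (hh0 : h ≠ 0) (hsupp : support h ⊆ support g) : ∃ a : ℝ, a ≠ 0 ∧ h = a • g := by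
  obtain ⟨i₀, hi₀⟩ := Function.ne_iff.1 hh0
  have hgi₀ : g i₀ ≠ 0 := hsupp hi₀
  set a := h i₀ / g i₀
  refine ⟨a, div_ne_zero hi₀ hgi₀, ?_⟩
  by_contra hne
  -- `h - a • g` vanishes at `i₀`, so its support is strictly smaller than that of `g`
  apply hg.2.2 (h - a • g) (W.sub_mem hhW (W.smul_mem a hg.1)) (sub_ne_zero.2 hne)
  refine ⟨fun i hi => ?_, fun hsub => ?_⟩
  · by_contra hgi
    simp only [Set.mem_ofPred_eq, not_not] at hgi hi
    have : h i = 0 := by_contra fun hhi => hsupp hhi hgi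
    simp [hgi, this] at hi
  · have : (h - a • g) i₀ ≠ 0 := hsub hgi₀
    simp only [Pi.sub_apply, Pi.smul_apply, smul_eq_mul, a] at this
    exact this (by field_simp; ring)

theorem bddAbove_circuitRatios [Finite ι] (W : Submodule ℝ (ι → ℝ)) :
    BddAbove {t : ℝ | ∃ g : ι → ℝ, IsElementaryVec W g ∧
      ∃ i j : ι, g i ≠ 0 ∧ g j ≠ 0 ∧ t = |g j / g i|} := by
  -- elementary vectors with the same support are proportional, so a ratio only depends on
  -- the support and the two coordinates
  have hfin : (⋃ p : Set ι × ι × ι, {t : ℝ | ∃ g : ι → ℝ, IsElementaryVec W g ∧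
      support g = p.1 ∧ t = |g p.2.2 / g p.2.1|}).Finite := by
    refine Set.finite_iUnion fun p => Set.Subsingleton.finite ?_
    rintro _ ⟨g, hg, hgp, rfl⟩ _ ⟨g', hg', hg'p, rfl⟩
    obtain ⟨a, ha, rfl⟩ := hg.exists_eq_smul hg'.1 hg'.2.1 (hg'p.trans hgp.symm).subset
    simp only [Pi.smul_apply, smul_eq_mul, mul_div_mul_left _ _ ha]
  refine hfin.bddAbove.mono ?_
  rintro _ ⟨g, hg, i, j, -, -, rfl⟩
  exact Set.mem_iUnion.2 ⟨(support g, i, j), g, hg, rfl, rfl⟩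

theorem kappaSub_nonneg (W : Submodule ℝ (ι → ℝ)) : 0 ≤ kappaSub W := by
  unfold kappaSub
  split_ifs
  · exact zero_le_one
  · exact Real.sSup_nonneg (by rintro _ ⟨g, -, i, j, -, -, rfl⟩; exact abs_nonneg _)

theorem IsElementaryVec.abs_le_kappaSub_mul [Finite ι] {g : ι → ℝ} (hg : IsElementaryVec W g)
    {i j : ι} (hi : g i ≠ 0) (hj : g j ≠ 0) : |g j| ≤ kappaSub W * |g i| := by
  unfold kappaSub
  split_ifs with htriv
  · rcases htriv with rfl | rfl
    · exact absurd ((Submodule.mem_bot ℝ).1 hg.1) hg.2.1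
    -- in the whole space, elementary vectors are supported on a single coordinate
    obtain rfl : j = i := by
      by_contra hji
      refine hg.2.2 (Pi.single i 1) trivial (by simp) ⟨fun k hk => ?_, fun hsub => ?_⟩
      · obtain rfl : k = i := by by_contra hki; simp [hki] at hk
        exact hi
      · simpa [hji] using hsub hj
    rw [one_mul]
  · calc |g j| = |g j / g i| * |g i| := by rw [abs_div, div_mul_cancel₀ _ (abs_ne_zero.2 hi)]
      _ ≤ _ := mul_le_mul_of_nonneg_right
          (le_csSup (bddAbove_circuitRatios W) ⟨g, hg, i, j, hi, hj, rfl⟩) (abs_nonneg _)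

end Kappa

section Steep

variable {ι : Type*} [Fintype ι]

/-- The coordinates where `g` descends with respect to the costs `r` at a rate exceeding `σ`. -/
def steepSupport (r : ι → ℝ) (σ : ℝ) (g : ι → ℝ) : Finset ι :=
  Finset.univ.filter fun j => r j * g j < -σ * |g j|

theorem mem_steepSupport {r g : ι → ℝ} {σ : ℝ} {j : ι} :
    j ∈ steepSupport r σ g ↔ r j * g j < -σ * |g j| := by
  simp [steepSupport]

theorem Conforms.steepSupport_subset {w g : ι → ℝ} (h : Conforms w g) (r : ι → ℝ) (σ : ℝ) :
    steepSupport r σ g ⊆ steepSupport r σ w := by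
  intro j hj
  rw [mem_steepSupport] at hj ⊢
  have hg : g j ≠ 0 := by rintro hg; simp [hg] at hj
  have hwg := h j hg
  rcases lt_or_gt_of_ne hg with hneg | hpos
  · have hw : w j < 0 := by nlinarith
    rw [abs_of_neg hneg] at hj; rw [abs_of_neg hw]
    nlinarith
  · have hw : 0 < w j := by nlinarith
    rw [abs_of_pos hpos] at hj; rw [abs_of_pos hw]
    nlinarith

theorem sum_sum_steepSupport_le {k : ℕ} {w : ι → ℝ} {g : Fin k → ι → ℝ}
    (hconf : ∀ l, Conforms w (g l)) (hsum : ∑ l, g l = w) (r : ι → ℝ) (σ : ℝ) :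
    ∑ l, ∑ j ∈ steepSupport r σ (g l), |g l j| ≤ ∑ j ∈ steepSupport r σ w, |w j| := calc
  _ ≤ ∑ l, ∑ j ∈ steepSupport r σ w, |g l j| := Finset.sum_le_sum fun l _ =>
      Finset.sum_le_sum_of_subset_of_nonneg ((hconf l).steepSupport_subset r σ)
        fun _ _ _ => abs_nonneg _
  _ = ∑ j ∈ steepSupport r σ w, |w j| := by
      rw [Finset.sum_comm]
      exact Finset.sum_congr rfl fun j _ => (abs_eq_sum_abs_of_conforms hconf hsum j).symm

theorem exists_mul_lt_neg_of_dotProduct_nonpos {r g : ι → ℝ} (hrg : r ⬝ᵥ g ≤ 0) {a : ℝ}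
    (ha : 0 ≤ a) {i : ι} (hi : Fintype.card ι * a < |r i * g i|) : ∃ j, r j * g j < -a := by
  by_contra! hge
  have hsingle : r i * g i + a ≤ ∑ j, (r j * g j + a) :=
    Finset.single_le_sum (f := fun j => r j * g j + a) (fun j _ => by linarith [hge j])
      (Finset.mem_univ i)
  rw [Finset.sum_add_distrib, Finset.sum_const, Finset.card_univ, nsmul_eq_mul] at hsingle
  have hcard : (1 : ℝ) ≤ Fintype.card ι := by exact_mod_cast Fintype.card_pos_iff.2 ⟨i⟩
  have := hge i
  rcases abs_cases (r i * g i) with ⟨h, -⟩ | ⟨h, -⟩ <;> rw [h] at hi <;>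
    nlinarith [dotProduct.eq_1 r g]

theorem abs_le_mul_sum_steepSupport {r g : ι → ℝ} (hrg : r ⬝ᵥ g ≤ 0) {κ σ : ℝ} (hκ : 0 ≤ κ)
    (hσ : 0 ≤ σ) (hratio : ∀ j j', g j ≠ 0 → g j' ≠ 0 → |g j'| ≤ κ * |g j|) {i : ι}
    (hi : Fintype.card ι * κ * σ < |r i|) :
    |g i| ≤ κ * ∑ j ∈ steepSupport r σ g, |g j| := by
  by_cases hgi : g i = 0
  · rw [hgi, abs_zero]
    exact mul_nonneg hκ (Finset.sum_nonneg fun _ _ => abs_nonneg _)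
  have hgi' : 0 < |g i| := abs_pos.2 hgi
  obtain ⟨j, hj⟩ := exists_mul_lt_neg_of_dotProduct_nonpos hrg
    (mul_nonneg (mul_nonneg hκ hσ) hgi'.le) (i := i) (by
      rw [abs_mul, ← mul_assoc, ← mul_assoc]; exact mul_lt_mul_of_pos_right hi hgi')
  have hgj : g j ≠ 0 := by
    rintro hgj; rw [hgj, mul_zero] at hj; nlinarith [mul_nonneg (mul_nonneg hκ hσ) hgi'.le]
  have hsteep : j ∈ steepSupport r σ g := by
    rw [mem_steepSupport]
    nlinarith [mul_le_mul_of_nonneg_left (hratio i j hgi hgj) hσ]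
  calc |g i| ≤ κ * |g j| := hratio j i hgj hgi
    _ ≤ κ * ∑ j ∈ steepSupport r σ g, |g j| := mul_le_mul_of_nonneg_left
        (Finset.single_le_sum (f := fun j => |g j|) (fun _ _ => abs_nonneg _) hsteep) hκ

end Steep

section LP

variable {m : ℕ} {ι : Type*} [Fintype ι]

def reducedCost (A : Matrix (Fin m) ι ℝ) (c : ι → ℝ) (π : Fin m → ℝ) : ι → ℝ :=
  fun i => c i - ∑ j, A j i * π j

theorem reducedCost_dotProduct {A : Matrix (Fin m) ι ℝ} {g : ι → ℝ} (hg : A *ᵥ g = 0)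
    (c : ι → ℝ) (π : Fin m → ℝ) : reducedCost A c π ⬝ᵥ g = c ⬝ᵥ g := by
  have : (fun i => ∑ j, A j i * π j) ⬝ᵥ g = π ⬝ᵥ (A *ᵥ g) := by
    rw [Matrix.dotProduct_mulVec]
    simp only [dotProduct, Matrix.vecMul, mul_comm]
  rw [show reducedCost A c π = c - fun i => ∑ j, A j i * π j from rfl, sub_dotProduct, this, hg,
    dotProduct_zero, sub_zero]

theorem exists_optimal_solution (A : Matrix (Fin m) ι ℝ) (b : Fin m → ℝ) (c u : ι → ℝ)
    {x : ι → ℝ} (hx : A *ᵥ x = b ∧ 0 ≤ x ∧ x ≤ u) :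
    ∃ xs : ι → ℝ, (A *ᵥ xs = b ∧ 0 ≤ xs ∧ xs ≤ u) ∧
      ∀ y : ι → ℝ, A *ᵥ y = b → 0 ≤ y → y ≤ u → c ⬝ᵥ xs ≤ c ⬝ᵥ y := by
  have hfeas : {y : ι → ℝ | A *ᵥ y = b ∧ 0 ≤ y ∧ y ≤ u} = (A *ᵥ ·) ⁻¹' {b} ∩ Set.Icc 0 u := by
    ext y; simp
  have hcompact : IsCompact {y : ι → ℝ | A *ᵥ y = b ∧ 0 ≤ y ∧ y ≤ u} := by
    rw [hfeas]
    exact isCompact_Icc.inter_left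
      (isClosed_singleton.preimage A.mulVecLin.continuous_of_finiteDimensional)
  obtain ⟨xs, hxs, hmin⟩ := hcompact.exists_isMinOn ⟨x, hx⟩
    (continuous_const.dotProduct continuous_id).continuousOn
  exact ⟨xs, hxs, fun y hyb hy0 hyu => hmin ⟨hyb, hy0, hyu⟩⟩

theorem reducedCost_dotProduct_nonpos {A : Matrix (Fin m) ι ℝ} {b : Fin m → ℝ} {c u : ι → ℝ}
    {x xs g : ι → ℝ} (hx : 0 ≤ x ∧ x ≤ u) (hxs : A *ᵥ xs = b ∧ 0 ≤ xs ∧ xs ≤ u)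
    (hopt : ∀ y : ι → ℝ, A *ᵥ y = b → 0 ≤ y → y ≤ u → c ⬝ᵥ xs ≤ c ⬝ᵥ y)
    (hg : A *ᵥ g = 0) (hconf : Conforms (xs - x) g) (hle : ∀ j, |g j| ≤ |xs j - x j|)
    (π : Fin m → ℝ) : reducedCost A c π ⬝ᵥ g ≤ 0 := by
  obtain ⟨hx0, hxu⟩ := hx
  obtain ⟨hxsb, hxs0, hxsu⟩ := hxs
  have hbox : ∀ j, 0 ≤ xs j - g j ∧ xs j - g j ≤ u j := by
    intro j
    have : (0 : ℝ) ≤ x j := hx0 j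
    have : (0 : ℝ) ≤ xs j := hxs0 j
    have := hxu j; have := hxsu j; have hlej := hle j
    rcases lt_trichotomy (g j) 0 with hneg | hzero | hpos
    · have hw : (xs j - x j) * g j > 0 := hconf j hneg.ne
      rw [abs_of_neg hneg, abs_of_neg (by nlinarith)] at hlej
      constructor <;> linarith
    · simp only [hzero, sub_zero]; exact ⟨hxs0 j, hxsu j⟩
    · have hw : (xs j - x j) * g j > 0 := hconf j hpos.ne'
      rw [abs_of_pos hpos, abs_of_pos (by nlinarith)] at hlej
      constructor <;> linarith
  have := hopt (xs - g) (by rw [Matrix.mulVec_sub, hxsb, hg, sub_zero])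
    (fun j => (hbox j).1) (fun j => (hbox j).2)
  rw [dotProduct_sub] at this
  rw [reducedCost_dotProduct hg]
  linarith

end LP

section ExtendedKernel

variable {m n : ℕ} {A : Matrix (Fin m) (Fin n) ℝ}

theorem sumElim_zero_mem_XA_iff {v : Fin n → ℝ} : Sum.elim v 0 ∈ XA A ↔ A *ᵥ v = 0 := by
  simp [XA]

theorem exists_conformal_decomposition_of_mulVec_eq_zero {w : Fin n → ℝ} (hw : A *ᵥ w = 0) :
    ∃ (k : ℕ) (g : Fin k → Fin n → ℝ), (∀ l, IsElementaryVec (XA A) (Sum.elim (g l) 0)) ∧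
      (∀ l, Conforms w (g l)) ∧ ∑ l, g l = w := by
  obtain ⟨k, G, hG, hconf, hsum⟩ := exists_conformal_decomposition (sumElim_zero_mem_XA_iff.2 hw)
  have hGinr : ∀ l, G l = Sum.elim (fun i => G l (Sum.inl i)) 0 := by
    intro l
    ext (i | j)
    · rfl
    · by_contra h
      exact (hconf l).ne_zero h rfl
  refine ⟨k, fun l i => G l (Sum.inl i), fun l => hGinr l ▸ hG l,
    fun l i hi => hconf l (Sum.inl i) hi, ?_⟩
  ext i
  simpa [Finset.sum_apply] using congrFun hsum (Sum.inl i)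

end ExtendedKernel

theorem sum_steepSupport_le_thetaLP {m n : ℕ} (A : Matrix (Fin m) (Fin n) ℝ) (c u : Fin n → ℝ)
    (π : Fin m → ℝ) (σ : ℝ) {x x' : Fin n → ℝ} (hx : 0 ≤ x ∧ x ≤ u) (hx' : 0 ≤ x' ∧ x' ≤ u) :
    ∑ j ∈ steepSupport (reducedCost A c π) σ (x' - x), |x' j - x j| ≤ thetaLP A c u x π σ := by
  set r := reducedCost A c π
  have hθ : thetaLP A c u x π σ =
      ∑ j, ((if σ < r j then x j else 0) + if r j < -σ then u j - x j else 0) := by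
    rw [Finset.sum_add_distrib, ← Finset.sum_filter, ← Finset.sum_filter]
    rfl
  rw [hθ, steepSupport, Finset.sum_filter]
  refine Finset.sum_le_sum fun j _ => ?_
  have : (0 : ℝ) ≤ x j := hx.1 j
  have : (0 : ℝ) ≤ x' j := hx'.1 j
  have := hx.2 j
  have := hx'.2 j
  simp only [Pi.sub_apply]
  rcases le_or_gt 0 (x' j - x j) with hd | hd
  · simp only [abs_of_nonneg hd]; split_ifs <;> nlinarith
  · simp only [abs_of_neg hd]; split_ifs <;> nlinarith

theorem close_optimal_solution_general {m n : ℕ} (A : Matrix (Fin m) (Fin n) ℝ)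
    (b : Fin m → ℝ) (c u : Fin n → ℝ)
    (σ : ℝ) (hσ : 0 ≤ σ) (π : Fin m → ℝ)
    (x : Fin n → ℝ) (hx : A.mulVec x = b ∧ 0 ≤ x ∧ x ≤ u) :
    ∃ xs : Fin n → ℝ,
      (A.mulVec xs = b ∧ 0 ≤ xs ∧ xs ≤ u) ∧
      (∀ y : Fin n → ℝ, A.mulVec y = b → 0 ≤ y → y ≤ u →
        ∑ i, c i * xs i ≤ ∑ i, c i * y i) ∧
      ∀ i : Fin n, |c i - ∑ j, A j i * π j| > (n : ℝ) * (⌈kappaSub (XA A)⌉ : ℝ) * σ →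
        |x i - xs i| ≤ kappaSub (XA A) * thetaLP A c u x π σ := by
  obtain ⟨xs, hxs, hopt⟩ := exists_optimal_solution A b c u hx
  refine ⟨xs, hxs, hopt, fun i hi => ?_⟩
  set κ := kappaSub (XA A)
  set r := reducedCost A c π
  obtain ⟨k, g, hg, hconf, hsum⟩ := exists_conformal_decomposition_of_mulVec_eq_zero
    (w := xs - x) (by rw [Matrix.mulVec_sub, hxs.1, hx.1, sub_self])
  have hcost : ∀ l, r ⬝ᵥ g l ≤ 0 := fun l =>
    reducedCost_dotProduct_nonpos hx.2 hxs hopt (sumElim_zero_mem_XA_iff.1 (hg l).1) (hconf l)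
      (abs_le_abs_of_conforms hconf hsum l) π
  have hratio : ∀ l j j', g l j ≠ 0 → g l j' ≠ 0 → |g l j'| ≤ κ * |g l j| := fun l j j' =>
    (hg l).abs_le_kappaSub_mul (i := Sum.inl j) (j := Sum.inl j')
  have hi' : Fintype.card (Fin n) * κ * σ < |r i| := by
    rw [Fintype.card_fin]
    refine lt_of_le_of_lt ?_ hi
    gcongr
    exact Int.le_ceil κ
  calc |x i - xs i| = ∑ l, |g l i| := by
        rw [abs_sub_comm]; exact abs_eq_sum_abs_of_conforms hconf hsum i
    _ ≤ ∑ l, κ * ∑ j ∈ steepSupport r σ (g l), |g l j| := Finset.sum_le_sum fun l _ =>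
        abs_le_mul_sum_steepSupport (hcost l) (kappaSub_nonneg _) hσ (hratio l) hi'
    _ ≤ κ * ∑ j ∈ steepSupport r σ (xs - x), |xs j - x j| := by
        rw [← Finset.mul_sum]
        exact mul_le_mul_of_nonneg_left (sum_sum_steepSupport_le hconf hsum r σ)
          (kappaSub_nonneg _)
    _ ≤ κ * thetaLP A c u x π σ := mul_le_mul_of_nonneg_left
        (sum_steepSupport_le_thetaLP A c u π σ hx.2 hxs.2) (kappaSub_nonneg _)

/-- For a feasible `x ∈ P_{A,b,u}`, any `π ∈ ℝ^m` and `σ ≥ 0`, there is an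
optimal solution `x*` of `LP(A,b,c,u)` with `|x_i − x*_i| ≤ κ(X_A)·θ(x,π,σ)` for every
`i ∈ J(π,σ) = {i : |c_i − A_i^⊤π| > n·⌈κ(X_A)⌉·σ}`. -/
theorem close_optimal_solution {m n : ℕ} (A : Matrix (Fin m) (Fin n) ℝ)
    (b : Fin m → ℝ) (c u : Fin n → ℝ) (hu : 0 ≤ u)
    (σ : ℝ) (hσ : 0 ≤ σ) (π : Fin m → ℝ)
    (x : Fin n → ℝ) (hx : A.mulVec x = b ∧ 0 ≤ x ∧ x ≤ u) :
    ∃ xs : Fin n → ℝ,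
      (A.mulVec xs = b ∧ 0 ≤ xs ∧ xs ≤ u) ∧
      (∀ y : Fin n → ℝ, A.mulVec y = b → 0 ≤ y → y ≤ u →
        ∑ i, c i * xs i ≤ ∑ i, c i * y i) ∧
      ∀ i : Fin n, |c i - ∑ j, A j i * π j| > (n : ℝ) * (⌈kappaSub (XA A)⌉ : ℝ) * σ →
        |x i - xs i| ≤ kappaSub (XA A) * thetaLP A c u x π σ :=
  close_optimal_solution_general A b c u σ hσ π x hx
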